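/- Suppose the linear functional ⟨·⟩ is reflection positive for reflections through edges and the two-point function G_L is torus symmetric. Then for any z ∈ T_L and any i ∈ {1,…,d} such that the coordinate z·e_i is odd, one has G_L(o, z) ≤ G_L(o, (z·e_i)·e_i). -/

import Mathlib

/-!
Let `a = z·e_i` (odd) and let `θ` be the reflection through edges with `θ o = a e_i`, oriented so
that `o` and `z' := z - a e_i` lie in the same half `T⁺`; then also `θ z' = z`. Setting
`F_p = F²_p ∏_{x ∈ T⁺ ∖ {p}} F¹_x`, one has `⟨F_p · θF_q⟩ = G_L(p, θ q)` for `p, q ∈ T⁺`, so the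
Cauchy–Schwarz inequality given by reflection positivity,
`2⟨F_o θF_{z'}⟩ ≤ ⟨F_o θF_o⟩ + ⟨F_{z'} θF_{z'}⟩`, reads `2 G_L(o, z) ≤ G_L(o, a e_i) + G_L(z', z)`,
and `G_L(z', z) = G_L(o, a e_i)` by torus symmetry.
-/

namespace RPPaper

/-- The torus `T_L = (ℤ/Lℤ)^d`. -/
abbrev Torus (d L : ℕ) : Type := Fin d → ZMod L

/-- The unit vector `e i`. -/
def unitVec {d L : ℕ} (i : Fin d) : Torus d L := fun k => if k = i then 1 else 0

/-- The point `a • e i` on the torus. -/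
def axis {d L : ℕ} (i : Fin d) (a : ZMod L) : Torus d L := fun k => if k = i then a else 0

/-- The integer representative of `a : ZMod L` in the interval `(-L/2, L/2]`. -/
def coordRep (L : ℕ) [NeZero L] (a : ZMod L) : ℤ :=
  if (a.val : ℤ) ≤ (L : ℤ) / 2 then (a.val : ℤ) else (a.val : ℤ) - (L : ℤ)

/-- The reflection of the torus in the hyperplane `{z : z·e i = t/2}` (here `t = 2m`);
it is a reflection through edges if `t` is odd, and through vertices if `t` is even. -/
def reflect {d L : ℕ} (i : Fin d) (t : ℕ) (x : Torus d L) : Torus d L :=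
  Function.update x i ((t : ZMod L) - x i)

/-- The positive half `T_L^+` of the torus associated to the reflection in the hyperplane
`{z : z·e i = t/2}`. -/
def posHalf (d L : ℕ) [NeZero L] (i : Fin d) (t : ℕ) : Finset (Torus d L) :=
  if t % 2 = 1 then Finset.univ.filter (fun x => (x i - (((t + 1) / 2 : ℕ) : ZMod L)).val < L / 2)
  else Finset.univ.filter (fun x => (x i - ((t / 2 : ℕ) : ZMod L)).val ≤ L / 2)

/-- The negative half `T_L^- = θ(T_L^+)`. -/
def negHalf (d L : ℕ) [NeZero L] (i : Fin d) (t : ℕ) : Finset (Torus d L) :=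
  (posHalf d L i t).image (reflect i t)

/-- The state space `S = ∏_{x ∈ T_L} Σ_x` (all local state spaces equal to `Sig`). -/
abbrev MState (d L : ℕ) (Sig : Type*) : Type _ := Torus d L → Sig

/-- `A : S → ℝ` has domain `D` if it depends only on the local states in `D`. -/
def HasDomain {d L : ℕ} {Sig : Type*} (A : MState d L Sig → ℝ) (D : Set (Torus d L)) : Prop :=
  ∀ w₁ w₂ : MState d L Sig, (∀ x ∈ D, w₁ x = w₂ x) → A w₁ = A w₂

/-- The action `θA (w) = A (θ w)`, where `(θ w) x = w (θ x)`, of the reflection on functions. -/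
def reflectFun {d L : ℕ} {Sig : Type*} (i : Fin d) (t : ℕ) (A : MState d L Sig → ℝ) :
    MState d L Sig → ℝ := fun w => A (fun x => w (reflect i t x))

/-- `⟨·⟩` is reflection positive with respect to the reflection in the hyperplane
`{z : z·e i = t/2}`: for all `A, B ∈ A_L^+` (members of the algebra with domain `T_L^+`),
`⟨A·θB⟩ = ⟨B·θA⟩` and `⟨A·θA⟩ ≥ 0`. -/
def IsRP {d L : ℕ} {Sig : Type*} [NeZero L] (AL : Subalgebra ℝ (MState d L Sig → ℝ))
    (phi : (MState d L Sig → ℝ) →ₗ[ℝ] ℝ) (i : Fin d) (t : ℕ) : Prop :=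
  ∀ A B : MState d L Sig → ℝ, A ∈ AL → B ∈ AL →
    HasDomain A ↑(posHalf d L i t) → HasDomain B ↑(posHalf d L i t) →
    phi (A * reflectFun i t B) = phi (B * reflectFun i t A) ∧ 0 ≤ phi (A * reflectFun i t A)

/-- Reflection positivity for all reflections through edges. -/
def RPEdges {d L : ℕ} {Sig : Type*} [NeZero L] (AL : Subalgebra ℝ (MState d L Sig → ℝ))
    (phi : (MState d L Sig → ℝ) →ₗ[ℝ] ℝ) : Prop :=
  ∀ (i : Fin d) (t : ℕ), t < 2 * L → t % 2 = 1 → IsRP AL phi i t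

/-- Reflection positivity for all reflections through vertices. -/
def RPVertices {d L : ℕ} {Sig : Type*} [NeZero L] (AL : Subalgebra ℝ (MState d L Sig → ℝ))
    (phi : (MState d L Sig → ℝ) →ₗ[ℝ] ℝ) : Prop :=
  ∀ (i : Fin d) (t : ℕ), t < 2 * L → t % 2 = 0 → IsRP AL phi i t

/-- The single-site function `F^j_x`, obtained from a function `f : Sig → ℝ` of the local
state at the origin by the (path-independent) sequence of reflections sending `o` to `x`. -/
def site {d L : ℕ} {Sig : Type*} (f : Sig → ℝ) (x : Torus d L) : MState d L Sig → ℝ :=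
  fun w => f (w x)

/-- The two-point function `G_L(x,y) = ⟨F²_x F²_y ∏_{z ≠ x,y} F¹_z⟩`. -/
noncomputable def twoPoint {d L : ℕ} {Sig : Type*} [NeZero L]
    (phi : (MState d L Sig → ℝ) →ₗ[ℝ] ℝ) (f1 f2 : Sig → ℝ) (x y : Torus d L) : ℝ :=
  phi (fun w => f2 (w x) * f2 (w y) * ∏ z ∈ (Finset.univ.erase x).erase y, f1 (w z))

/-- Torus symmetry: `⟨∏_{x∈A}F¹_x ∏_{x∈B}F²_x⟩ = ⟨∏_{x∈A+z}F¹_x ∏_{x∈B+z}F²_x⟩`. -/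
def TorusSymmetric {d L : ℕ} {Sig : Type*} [NeZero L]
    (phi : (MState d L Sig → ℝ) →ₗ[ℝ] ℝ) (f1 f2 : Sig → ℝ) : Prop :=
  ∀ (A B : Finset (Torus d L)) (z : Torus d L),
    phi (fun w => (∏ x ∈ A, f1 (w x)) * ∏ x ∈ B, f2 (w x)) =
      phi (fun w => (∏ x ∈ A, f1 (w (x + z))) * ∏ x ∈ B, f2 (w (x + z)))


end RPPaper

lemma ZMod.val_neg_sub_one {L : ℕ} [NeZero L] (u : ZMod L) : (-u - 1).val = L - 1 - u.val := by
  have hu : u.val < L := u.val_lt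
  have hcast : -u - 1 = ((L - 1 - u.val : ℕ) : ZMod L) := by
    rw [Nat.cast_sub (by omega), Nat.cast_sub (by omega), ZMod.natCast_self, ZMod.natCast_zmod_val]
    ring
  rw [hcast, ZMod.val_cast_of_lt (by omega)]

namespace Finset

lemma prod_erase_mul_prod_erase_comp_of_swap {α M : Type*} [Fintype α] [DecidableEq α]
    [CommMonoid M] {P : Finset α} {θ : α → α} (hθ : Function.Involutive θ)
    (hswap : ∀ x, θ x ∈ P ↔ x ∉ P) (g : α → M) {p q : α} (hp : p ∈ P) (hq : q ∈ P) :
    (∏ x ∈ P.erase p, g x) * ∏ x ∈ P.erase q, g (θ x) = ∏ x ∈ (univ.erase p).erase (θ q), g x := by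
  have hθq : θ q ∉ P := (hswap (θ q)).1 (by rwa [hθ q])
  have hreindex : ∏ x ∈ P.erase q, g (θ x) = ∏ y ∈ Pᶜ.erase (θ q), g y :=
    prod_nbij' θ θ (by simp [hswap, hθ.injective.eq_iff])
      (by simp [hswap, hθ.eq_iff]) (fun x _ => hθ x) (fun x _ => hθ x) (fun _ _ => rfl)
  have hsplit : (univ.erase p).erase (θ q) = P.erase p ∪ Pᶜ.erase (θ q) := by
    ext x
    by_cases hx : x ∈ P <;> aesop
  rw [hreindex, hsplit, prod_union]
  exact disjoint_compl_right.mono (erase_subset _ _) (erase_subset _ _)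

end Finset

namespace RPPaper

section

variable {d L : ℕ} {Sig : Type*}

lemma reflect_involutive (i : Fin d) (t : ℕ) : Function.Involutive (reflect (L := L) i t) := by
  intro x
  simp [reflect]

lemma reflect_of_natCast_eq {i : Fin d} {t : ℕ} {c : ZMod L} (htc : (t : ZMod L) = c)
    (x : Torus d L) : reflect i t x = Function.update x i (c - x i) := by
  rw [reflect, htc]

lemma mem_posHalf_of_odd [NeZero L] {i : Fin d} {t : ℕ} (ht : t % 2 = 1) {x : Torus d L} :
    x ∈ posHalf d L i t ↔ (x i - (((t + 1) / 2 : ℕ) : ZMod L)).val < L / 2 := by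
  simp [posHalf, ht]

lemma reflect_mem_posHalf_iff [NeZero L] (hL : Even L) (i : Fin d) {t : ℕ} (ht : t % 2 = 1)
    (x : Torus d L) : reflect i t x ∈ posHalf d L i t ↔ x ∉ posHalf d L i t := by
  rw [mem_posHalf_of_odd ht, mem_posHalf_of_odd ht]
  set s : ZMod L := (((t + 1) / 2 : ℕ) : ZMod L)
  have hts : (t : ZMod L) = 2 * s - 1 := by
    have hcast := congrArg (Nat.cast : ℕ → ZMod L) (show t + 1 = 2 * ((t + 1) / 2) by omega)
    push_cast at hcast
    linear_combination hcast
  have hreflect : reflect i t x i - s = -(x i - s) - 1 := by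
    rw [reflect, Function.update_self, hts]
    ring
  have hval := (x i - s).val_lt
  obtain ⟨m, hm⟩ := hL
  rw [hreflect, ZMod.val_neg_sub_one]
  omega

lemma mem_posHalf_add_of_apply_eq_zero [NeZero L] (hL : Even L) (i : Fin d) {a : ℕ}
    (ha : a % 2 = 1) (haL : a < L) {x : Torus d L} (hx : x i = 0) :
    x ∈ posHalf d L i (a + L) := by
  obtain ⟨m, rfl⟩ := hL
  have hcast :
      -(((a + (m + m) + 1) / 2 : ℕ) : ZMod (m + m)) = ((m - (a + 1) / 2 : ℕ) : ZMod _) := by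
    rw [show (a + (m + m) + 1) / 2 = (a + 1) / 2 + m by omega, Nat.cast_sub (by omega)]
    have hL0 : ((m + m : ℕ) : ZMod (m + m)) = 0 := ZMod.natCast_self _
    push_cast at hL0 ⊢
    linear_combination -hL0
  rw [mem_posHalf_of_odd (by omega), hx, zero_sub, hcast, ZMod.val_cast_of_lt (by omega)]
  omega

lemma HasDomain.sub {A B : MState d L Sig → ℝ} {D : Set (Torus d L)} (hA : HasDomain A D)
    (hB : HasDomain B D) : HasDomain (A - B) D := fun w₁ w₂ hw => by
  simp only [Pi.sub_apply, hA w₁ w₂ hw, hB w₁ w₂ hw]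

lemma IsRP.two_mul_le_add [NeZero L] {AL : Subalgebra ℝ (MState d L Sig → ℝ)}
    {phi : (MState d L Sig → ℝ) →ₗ[ℝ] ℝ} {i : Fin d} {t : ℕ} (hRP : IsRP AL phi i t)
    {A B : MState d L Sig → ℝ} (hA : A ∈ AL) (hB : B ∈ AL)
    (hAD : HasDomain A ↑(posHalf d L i t)) (hBD : HasDomain B ↑(posHalf d L i t)) :
    2 * phi (A * reflectFun i t B) ≤
      phi (A * reflectFun i t A) + phi (B * reflectFun i t B) := by
  have hsymm := (hRP A B hA hB hAD hBD).1
  have hpos := (hRP (A - B) (A - B) (sub_mem hA hB) (sub_mem hA hB) (hAD.sub hBD)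
    (hAD.sub hBD)).2
  have hexpand : (A - B) * reflectFun i t (A - B) = A * reflectFun i t A - A * reflectFun i t B -
      (B * reflectFun i t A - B * reflectFun i t B) := by
    funext w
    simp only [Pi.mul_apply, Pi.sub_apply, reflectFun]
    ring
  rw [hexpand, map_sub, map_sub, map_sub, ← hsymm] at hpos
  linarith

lemma TorusSymmetric.twoPoint_add_right [NeZero L] {phi : (MState d L Sig → ℝ) →ₗ[ℝ] ℝ}
    {f1 f2 : Sig → ℝ} (hsym : TorusSymmetric phi f1 f2) {x y : Torus d L} (hxy : x ≠ y)
    (v : Torus d L) : twoPoint phi f1 f2 (x + v) (y + v) = twoPoint phi f1 f2 x y := by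
  have htrans := hsym ((Finset.univ.erase x).erase y) {x, y} v
  have hreindex : ∀ w : MState d L Sig, ∏ a ∈ (Finset.univ.erase x).erase y, f1 (w (a + v)) =
      ∏ b ∈ (Finset.univ.erase (x + v)).erase (y + v), f1 (w b) := fun w =>
    Finset.prod_nbij' (· + v) (· - v) (by simp) (by simp [sub_eq_iff_eq_add]) (by simp) (by simp)
      (fun _ _ => rfl)
  simp only [Finset.prod_pair hxy, hreindex] at htrans
  simp only [twoPoint, mul_comm _ (f2 _ * f2 _)] at htrans ⊢
  exact htrans.symm

def halfProduct (P : Finset (Torus d L)) (f1 f2 : Sig → ℝ) (p : Torus d L) :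
    MState d L Sig → ℝ :=
  site f2 p * ∏ x ∈ P.erase p, site f1 x

lemma halfProduct_mem {AL : Subalgebra ℝ (MState d L Sig → ℝ)} {f1 f2 : Sig → ℝ}
    (hF1 : ∀ x, site f1 x ∈ AL) (hF2 : ∀ x, site f2 x ∈ AL) (P : Finset (Torus d L))
    (p : Torus d L) : halfProduct P f1 f2 p ∈ AL :=
  mul_mem (hF2 p) (prod_mem fun x _ => hF1 x)

lemma hasDomain_halfProduct {P : Finset (Torus d L)} (f1 f2 : Sig → ℝ) {p : Torus d L}
    (hp : p ∈ P) : HasDomain (halfProduct P f1 f2 p) ↑P := fun w₁ w₂ hw => by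
  simp only [halfProduct, Pi.mul_apply, Finset.prod_apply, site]
  rw [hw p hp, Finset.prod_congr rfl fun x hx => congrArg f1 (hw x (Finset.mem_of_mem_erase hx))]

lemma twoPoint_reflect_eq [NeZero L] (hL : Even L) (phi : (MState d L Sig → ℝ) →ₗ[ℝ] ℝ)
    (f1 f2 : Sig → ℝ) {i : Fin d} {t : ℕ} (ht : t % 2 = 1) {p q : Torus d L}
    (hp : p ∈ posHalf d L i t) (hq : q ∈ posHalf d L i t) :
    twoPoint phi f1 f2 p (reflect i t q) =
      phi (halfProduct (posHalf d L i t) f1 f2 p *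
        reflectFun i t (halfProduct (posHalf d L i t) f1 f2 q)) := by
  rw [twoPoint]
  congr 1
  funext w
  simp only [halfProduct, reflectFun, Pi.mul_apply, Finset.prod_apply, site]
  rw [mul_mul_mul_comm, Finset.prod_erase_mul_prod_erase_comp_of_swap (reflect_involutive i t)
    (reflect_mem_posHalf_iff hL i ht) (fun x => f1 (w x)) hp hq]

lemma odd_val_of_odd_coordRep [NeZero L] (hL : Even L) {a : ZMod L} (ha : Odd (coordRep L a)) :
    a.val % 2 = 1 := by
  obtain ⟨m, hm⟩ := hL
  rw [Int.odd_iff, coordRep] at ha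
  split_ifs at ha <;> omega

lemma axis_add_update_zero (i : Fin d) (z : Torus d L) :
    axis i (z i) + Function.update z i 0 = z := by
  funext k
  by_cases hk : k = i
  · subst hk
    simp [axis]
  · simp [axis, hk]

end

theorem statement0_general {d L : ℕ} [NeZero L] (hL : Even L) {Sig : Type*}
    (AL : Subalgebra ℝ (MState d L Sig → ℝ))
    (phi : (MState d L Sig → ℝ) →ₗ[ℝ] ℝ)
    (f1 f2 : Sig → ℝ)
    (hF1 : ∀ x : Torus d L, site f1 x ∈ AL) (hF2 : ∀ x : Torus d L, site f2 x ∈ AL)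
    (hRP : RPEdges AL phi) (hsym : TorusSymmetric phi f1 f2)
    (z : Torus d L) (i : Fin d) (hodd : Odd (coordRep L (z i))) :
    twoPoint phi f1 f2 0 z ≤ twoPoint phi f1 f2 0 (axis i (z i)) := by
  have ha := odd_val_of_odd_coordRep hL hodd
  have haL := (z i).val_lt
  -- `t` and `t - L` give the same reflection; the shift by `L` selects the half containing `o`.
  set t := (z i).val + L
  have ht : t % 2 = 1 := by obtain ⟨m, hm⟩ := hL; omega
  have htz : (t : ZMod L) = z i := by simp [t]
  set z' := Function.update z i 0
  have h0 : (0 : Torus d L) ∈ posHalf d L i t := mem_posHalf_add_of_apply_eq_zero hL i ha haL rfl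
  have hz' : z' ∈ posHalf d L i t :=
    mem_posHalf_add_of_apply_eq_zero hL i ha haL (Function.update_self _ _ _)
  have hθ0 : reflect i t 0 = axis i (z i) := by
    funext k
    simp [reflect_of_natCast_eq htz, axis, Function.update_apply]
  have hθz' : reflect i t z' = z := by simp [reflect_of_natCast_eq htz, z']
  have h0z : (0 : Torus d L) ≠ axis i (z i) := fun h => by
    have hzi : z i = 0 := by simpa [axis] using (congrFun h i).symm
    simp [hzi] at ha
  have htrans : twoPoint phi f1 f2 z' z = twoPoint phi f1 f2 0 (axis i (z i)) := by
    have := hsym.twoPoint_add_right h0z z'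
    rwa [zero_add, axis_add_update_zero] at this
  have hCS := (hRP i t (by omega) ht).two_mul_le_add (halfProduct_mem hF1 hF2 _ 0)
    (halfProduct_mem hF1 hF2 _ z') (hasDomain_halfProduct f1 f2 h0)
    (hasDomain_halfProduct f1 f2 hz')
  rw [← twoPoint_reflect_eq hL phi f1 f2 ht h0 h0, ← twoPoint_reflect_eq hL phi f1 f2 ht h0 hz',
    ← twoPoint_reflect_eq hL phi f1 f2 ht hz' hz', hθ0, hθz', htrans] at hCS
  linarith

/-- If `⟨·⟩` is reflection positive for reflections through edges and the two-point function
is torus symmetric, then for any `z ∈ T_L` and `i` with `z·e i` odd,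
`G_L(o, z) ≤ G_L(o, (z·e i)·e i)`. -/
theorem statement0 {d L : ℕ} [NeZero L] (hd : 2 ≤ d) (hL : Even L) {Sig : Type*}
    (AL : Subalgebra ℝ (MState d L Sig → ℝ)) (hfin : FiniteDimensional ℝ AL)
    (phi : (MState d L Sig → ℝ) →ₗ[ℝ] ℝ) (hone : phi 1 = 1)
    (f1 f2 : Sig → ℝ)
    (hF1 : ∀ x : Torus d L, site f1 x ∈ AL) (hF2 : ∀ x : Torus d L, site f2 x ∈ AL)
    (hRP : RPEdges AL phi) (hsym : TorusSymmetric phi f1 f2)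
    (z : Torus d L) (i : Fin d) (hodd : Odd (coordRep L (z i))) :
    twoPoint phi f1 f2 0 z ≤ twoPoint phi f1 f2 0 (axis i (z i)) :=
  statement0_general hL AL phi f1 f2 hF1 hF2 hRP hsym z i hodd

end RPPaper
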